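/- Let Q be a convex set in ℝⁿ = ℝ^{n′} × ℝ^{n″}, and let π′, π″ denote the projections onto the components ℝ^{n′} and ℝ^{n″} respectively. Let Q′ be a slice orthogonal to the second component, i.e. Q′ = (π″)⁻¹(x̄″) ∩ Q for some x̄″ ∈ π″(Q). Then there exists a constant C(n), depending only on n = n′ + n″, such that C(n) Lebⁿ(Q) ≥ ℋ^{n′}(Q′) ℋ^{n″}(π″(Q)), where ℋ^d denotes the d-dimensional Hausdorff measure. -/

import Mathlib

open Set MeasureTheory Metric Bornology
open scoped ENNReal NNReal Pointwise

noncomputable section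

abbrev Euc (n : ℕ) := EuclideanSpace ℝ (Fin n)

/-- Partial gradient of the cost in the first variable: `D_x c(x,y)`. -/
noncomputable def gradX (n : ℕ) (c : Euc n → Euc n → ℝ) (x y : Euc n) : Euc n :=
  gradient (fun x' => c x' y) x

/-- Partial gradient of the cost in the second variable: `D_y c(x,y)`. -/
noncomputable def gradY (n : ℕ) (c : Euc n → Euc n → ℝ) (x y : Euc n) : Euc n :=
  gradient (fun y' => c x y') y

/-- Mixed second derivative `D²_{xy} c` as a continuous linear map. -/
noncomputable def DxyC (n : ℕ) (c : Euc n → Euc n → ℝ) (x y : Euc n) : Euc n →L[ℝ] Euc n :=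
  fderiv ℝ (fun x' => gradY n c x' y) x

/-- Second derivative `D²_{xx} c`. -/
noncomputable def DxxC (n : ℕ) (c : Euc n → Euc n → ℝ) (x y : Euc n) : Euc n →L[ℝ] Euc n :=
  fderiv ℝ (fun x' => gradX n c x' y) x

/-- Third derivative `D²_{xx} D_y c`. -/
noncomputable def DxxyC (n : ℕ) (c : Euc n → Euc n → ℝ) (x y : Euc n) :
    Euc n →L[ℝ] Euc n →L[ℝ] Euc n :=
  fderiv ℝ (fun x' => DxyC n c x' y) x

/-- `β⁺_c = ‖D²_{xy} c‖_{L∞(U×V)}`. -/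
noncomputable def betaPlus (n : ℕ) (c : Euc n → Euc n → ℝ) (U V : Set (Euc n)) : ℝ :=
  sSup ((fun p : Euc n × Euc n => ‖DxyC n c p.1 p.2‖) '' (U ×ˢ V))

/-- `β⁻_c = ‖(D²_{xy} c)⁻¹‖_{L∞(U×V)}`. -/
noncomputable def betaMinus (n : ℕ) (c : Euc n → Euc n → ℝ) (U V : Set (Euc n)) : ℝ :=
  sSup ((fun p : Euc n × Euc n => ‖(DxyC n c p.1 p.2).inverse‖) '' (U ×ˢ V))

/-- `γ⁺_c = ‖det D²_{xy} c‖_{L∞(U×V)}`. -/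
noncomputable def gammaPlus (n : ℕ) (c : Euc n → Euc n → ℝ) (U V : Set (Euc n)) : ℝ :=
  sSup ((fun p : Euc n × Euc n =>
    |LinearMap.det ((DxyC n c p.1 p.2 : Euc n →L[ℝ] Euc n) : Euc n →ₗ[ℝ] Euc n)|) '' (U ×ˢ V))

/-- `γ⁻_c = ‖(det D²_{xy} c)⁻¹‖_{L∞(U×V)}`. -/
noncomputable def gammaMinus (n : ℕ) (c : Euc n → Euc n → ℝ) (U V : Set (Euc n)) : ℝ :=
  sSup ((fun p : Euc n × Euc n =>
    |LinearMap.det ((DxyC n c p.1 p.2 : Euc n →L[ℝ] Euc n) : Euc n →ₗ[ℝ] Euc n)|⁻¹) '' (U ×ˢ V))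

noncomputable def supDxx (n : ℕ) (c : Euc n → Euc n → ℝ) (U V : Set (Euc n)) : ℝ :=
  sSup ((fun p : Euc n × Euc n => ‖DxxC n c p.1 p.2‖) '' (U ×ˢ V))

noncomputable def supDx (n : ℕ) (c : Euc n → Euc n → ℝ) (U V : Set (Euc n)) : ℝ :=
  sSup ((fun p : Euc n × Euc n => ‖gradX n c p.1 p.2‖) '' (U ×ˢ V))

noncomputable def supDxxy (n : ℕ) (c : Euc n → Euc n → ℝ) (U V : Set (Euc n)) : ℝ :=
  sSup ((fun p : Euc n × Euc n => ‖DxxyC n c p.1 p.2‖) '' (U ×ˢ V))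

/-- The constant `M_c` from Theorem 4.3. -/
noncomputable def Mconst (n : ℕ) (c : Euc n → Euc n → ℝ) (U V : Set (Euc n)) : ℝ :=
  (betaMinus n c U V) ^ 2 * supDxx n c U V +
    (betaMinus n c U V) ^ 3 * supDx n c U V * supDxxy n c U V

/-- The constant `ε_c` of Lemma 6.1: `1/ε_c = 2 (β⁺)⁴ (β⁻)⁶ ‖D³_{xxy} c‖_∞`. -/
noncomputable def epsC (n : ℕ) (c : Euc n → Euc n → ℝ) (U V : Set (Euc n)) : ℝ :=
  (2 * (betaPlus n c U V) ^ 4 * (betaMinus n c U V) ^ 6 * supDxxy n c U V)⁻¹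

/-- Condition (B0). -/
def B0cond (n : ℕ) (c : Euc n → Euc n → ℝ) (U V : Set (Euc n)) : Prop :=
  IsOpen U ∧ IsBounded U ∧ IsOpen V ∧ IsBounded V ∧
    ContDiffOn ℝ 4 (Function.uncurry c) (closure U ×ˢ closure V)

/-- `f` is a (C¹-) diffeomorphism from `S` onto its range. -/
def DiffeoOnto (n : ℕ) (f : Euc n → Euc n) (S : Set (Euc n)) : Prop :=
  Set.InjOn f S ∧ ContDiffOn ℝ 1 f S ∧ ContDiffOn ℝ 1 (Function.invFunOn f S) (f '' S)

/-- Condition (B1) (bi-twist). -/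
def B1cond (n : ℕ) (c : Euc n → Euc n → ℝ) (U V : Set (Euc n)) : Prop :=
  (∀ y ∈ closure V, DiffeoOnto n (fun x => -gradY n c x y) (closure U)) ∧
  (∀ x ∈ closure U, DiffeoOnto n (fun y => -gradX n c x y) (closure V))

/-- `U_ȳ := -D_y c(U, ȳ)`. -/
def Uyset (n : ℕ) (c : Euc n → Euc n → ℝ) (U : Set (Euc n)) (ybar : Euc n) : Set (Euc n) :=
  (fun x => -gradY n c x ybar) '' U

/-- `V_x̄ := -D_x c(x̄, V)`. -/
def Vxset (n : ℕ) (c : Euc n → Euc n → ℝ) (V : Set (Euc n)) (xbar : Euc n) : Set (Euc n) :=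
  (fun y => -gradX n c xbar y) '' V

/-- Condition (B2) (bi-convexity). -/
def B2cond (n : ℕ) (c : Euc n → Euc n → ℝ) (U V : Set (Euc n)) : Prop :=
  (∀ y ∈ closure V, Convex ℝ (Uyset n c U y)) ∧ (∀ x ∈ closure U, Convex ℝ (Vxset n c V x))

/-- A strongly convex set: each boundary point is touched from outside by a sphere of
radius `R` enclosing the set. -/
def StronglyConvexSet (n : ℕ) (Q : Set (Euc n)) : Prop :=
  Convex ℝ Q ∧ ∃ R : ℝ, 0 < R ∧ ∀ x ∈ frontier Q, ∃ z : Euc n, dist x z = R ∧ Q ⊆ closedBall z R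

/-- Condition (B2s). -/
def B2scond (n : ℕ) (c : Euc n → Euc n → ℝ) (U V : Set (Euc n)) : Prop :=
  (∀ y ∈ closure V, StronglyConvexSet n (Uyset n c U y)) ∧
  (∀ x ∈ closure U, StronglyConvexSet n (Vxset n c V x))

/-- An affinely parameterized line segment on `[-1,1]`. -/
def IsAffineSeg (n : ℕ) (F : ℝ → Euc n × Euc n) : Prop :=
  ∃ a b : Euc n × Euc n, ∀ t ∈ Icc (-1 : ℝ) 1, F t = a + t • b

/-- `∂²/∂s∂t c(x(s), y(t))` at `(0,0)`. -/
noncomputable def crossDiff2 (n : ℕ) (c : Euc n → Euc n → ℝ) (x y : ℝ → Euc n) : ℝ :=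
  deriv (fun s => deriv (fun t => c (x s) (y t)) 0) 0

/-- `∂⁴/∂s²∂t² c(x(s), y(t))` at `(0,0)`. -/
noncomputable def crossDiff4 (n : ℕ) (c : Euc n → Euc n → ℝ) (x y : ℝ → Euc n) : ℝ :=
  deriv (deriv (fun s => deriv (deriv (fun t => c (x s) (y t))) 0)) 0

/-- Condition (B3) (= A3w). -/
def B3cond (n : ℕ) (c : Euc n → Euc n → ℝ) (U V : Set (Euc n)) : Prop :=
  ∀ x y : ℝ → Euc n, (∀ t ∈ Icc (-1 : ℝ) 1, x t ∈ closure U) →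
    (∀ t ∈ Icc (-1 : ℝ) 1, y t ∈ closure V) →
    IsAffineSeg n (fun t => (gradY n c (x t) (y 0), gradX n c (x 0) (y t))) →
    crossDiff2 n c x y = 0 → crossDiff4 n c x y ≤ 0

/-- Condition (B4) (non-negative cross-curvature). -/
def B4cond (n : ℕ) (c : Euc n → Euc n → ℝ) (U V : Set (Euc n)) : Prop :=
  ∀ x y : ℝ → Euc n, (∀ t ∈ Icc (-1 : ℝ) 1, x t ∈ closure U) →
    (∀ t ∈ Icc (-1 : ℝ) 1, y t ∈ closure V) →
    IsAffineSeg n (fun t => (gradY n c (x t) (y 0), gradX n c (x 0) (y t))) →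
    crossDiff4 n c x y ≤ 0

/-- The `c*`-transform `u^{c*}(y) = sup_{x ∈ A} (-c(x,y) - u(x))`. -/
noncomputable def cStarT (n : ℕ) (c : Euc n → Euc n → ℝ) (A : Set (Euc n)) (u : Euc n → ℝ)
    (y : Euc n) : ℝ :=
  sSup ((fun x => -c x y - u x) '' A)

/-- `u` is `c`-convex on `A` (relative to the target set `B`): `u = (u^{c*})^c`. -/
def CConvexOn (n : ℕ) (c : Euc n → Euc n → ℝ) (A B : Set (Euc n)) (u : Euc n → ℝ) : Prop :=
  ∀ x ∈ A, u x = sSup ((fun y => -c x y - cStarT n c A u y) '' B)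

/-- The `c`-subdifferential `∂ᶜu ⊂ A × B`. -/
def cSubdiff (n : ℕ) (c : Euc n → Euc n → ℝ) (A B : Set (Euc n)) (u : Euc n → ℝ) :
    Set (Euc n × Euc n) :=
  {p | p.1 ∈ A ∧ p.2 ∈ B ∧ u p.1 + cStarT n c A u p.2 + c p.1 p.2 = 0}

def cSubdiffAt (n : ℕ) (c : Euc n → Euc n → ℝ) (A B : Set (Euc n)) (u : Euc n → ℝ)
    (x : Euc n) : Set (Euc n) :=
  {y | (x, y) ∈ cSubdiff n c A B u}

def cSubdiffImg (n : ℕ) (c : Euc n → Euc n → ℝ) (A B : Set (Euc n)) (u : Euc n → ℝ)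
    (X : Set (Euc n)) : Set (Euc n) :=
  ⋃ x ∈ X, cSubdiffAt n c A B u x

/-- `∂^{c*}u^{c*}(Y) = {x : ∃ y ∈ Y, (x,y) ∈ ∂ᶜu}`. -/
def cSubdiffPre (n : ℕ) (c : Euc n → Euc n → ℝ) (A B : Set (Euc n)) (u : Euc n → ℝ)
    (Y : Set (Euc n)) : Set (Euc n) :=
  {x | ∃ y ∈ Y, (x, y) ∈ cSubdiff n c A B u}

/-- `|∂ᶜu| ≥ lam` on `S`. -/
def MAge (n : ℕ) (c : Euc n → Euc n → ℝ) (A B : Set (Euc n)) (u : Euc n → ℝ) (lam : ℝ)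
    (S : Set (Euc n)) : Prop :=
  ∀ X : Set (Euc n), X ⊆ S → MeasurableSet X →
    ENNReal.ofReal lam * volume X ≤ volume (cSubdiffImg n c A B u X)

/-- `|∂ᶜu| ≤ lam` on `S`. -/
def MAle (n : ℕ) (c : Euc n → Euc n → ℝ) (A B : Set (Euc n)) (u : Euc n → ℝ) (lam : ℝ)
    (S : Set (Euc n)) : Prop :=
  ∀ X : Set (Euc n), X ⊆ S → MeasurableSet X →
    volume (cSubdiffImg n c A B u X) ≤ ENNReal.ofReal lam * volume X

/-- The inverse of the cost-exponential coordinate change `q(x) = -D_y c(x, ȳ)`. -/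
noncomputable def xOf (n : ℕ) (c : Euc n → Euc n → ℝ) (U : Set (Euc n)) (ybar : Euc n) :
    Euc n → Euc n :=
  Function.invFunOn (fun x => -gradY n c x ybar) (closure U)

/-- `cl U_ȳ := -D_y c(cl U, ȳ)`. -/
def clUy (n : ℕ) (c : Euc n → Euc n → ℝ) (U : Set (Euc n)) (ybar : Euc n) : Set (Euc n) :=
  (fun x => -gradY n c x ybar) '' closure U

/-- The modified cost `c̃(q,y) = c(x(q), y) - c(x(q), ȳ)`. -/
noncomputable def modCost (n : ℕ) (c : Euc n → Euc n → ℝ) (U : Set (Euc n)) (ybar : Euc n)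
    (q y : Euc n) : ℝ :=
  c (xOf n c U ybar q) y - c (xOf n c U ybar q) ybar

/-- The modified potential `ũ(q) = u(x(q)) + c(x(q), ȳ)`. -/
noncomputable def modPot (n : ℕ) (c : Euc n → Euc n → ℝ) (U : Set (Euc n)) (ybar : Euc n)
    (u : Euc n → ℝ) (q : Euc n) : ℝ :=
  u (xOf n c U ybar q) + c (xOf n c U ybar q) ybar

/-- The `c̃`-cone generated by `qt` and `Q` with height `-h0 > 0`. -/
noncomputable def cConeFun (n : ℕ) (ct : Euc n → Euc n → ℝ) (B Q : Set (Euc n)) (qt : Euc n)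
    (h0 : ℝ) (q : Euc n) : ℝ :=
  sSup {r : ℝ | ∃ y ∈ B, r = -ct q y + ct qt y + h0 ∧
    ∀ p ∈ frontier Q, -ct p y + ct qt y + h0 ≤ 0}

/-- The ordinary subdifferential `∂u(x)` relative to a domain `A`. -/
def subdiffAt (n : ℕ) (A : Set (Euc n)) (u : Euc n → ℝ) (x : Euc n) : Set (Euc n) :=
  {p | ∀ ε > 0, ∃ δ > 0, ∀ x' ∈ A, ‖x' - x‖ < δ →
    u x + @inner ℝ _ _ p (x' - x) - ε * ‖x' - x‖ ≤ u x'}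

/-- The dual norm `‖v‖*_K = sup_{w ∈ K} ⟨w, v⟩`. -/
noncomputable def dualNorm (n : ℕ) (K : Set (Euc n)) (v : Euc n) : ℝ :=
  sSup ((fun w => (@inner ℝ _ _ w v : ℝ)) '' K)

/-- The section `S(x̄, ȳ, τ)`. -/
def sectS (n : ℕ) (c : Euc n → Euc n → ℝ) (U : Set (Euc n)) (u : Euc n → ℝ)
    (xbar ybar : Euc n) (τ : ℝ) : Set (Euc n) :=
  {x ∈ U | u x ≤ u xbar - c x ybar + c xbar ybar + τ}

/-- The measure with density `f` restricted to `A`. -/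
noncomputable def densMeasure (n : ℕ) (A : Set (Euc n)) (f : Euc n → ℝ) : Measure (Euc n) :=
  (volume.restrict A).withDensity fun x => ENNReal.ofReal (f x)

end

/-! For `w ∈ Q` the midpoint of `(x, x̄″)` and `w` lies in `Q` whenever `(x, x̄″)` does, so every
slice of `Q` over the halved projection `½ (x̄″ + π″(Q))` contains a copy of `Q′` scaled by `½`.
Integrating these slices gives `2⁻ⁿ Leb(Q′) Leb(π″(Q)) ≤ Leb(Q)`, and this holds for any pair of
Haar measures on the factors. On Euclidean space `ℋᵈ` is a Haar measure, hence a positive multiple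
of Lebesgue measure. -/

theorem Convex.homothety_image_preimage_prodMk_subset {E F : Type*} [AddCommGroup E]
    [Module ℝ E] [AddCommGroup F] [Module ℝ F] {Q : Set (E × F)} (hQ : Convex ℝ Q)
    {w : E × F} (hw : w ∈ Q) (y : F) :
    AffineMap.homothety w.1 (2⁻¹ : ℝ) '' ((·, y) ⁻¹' Q) ⊆
      (·, AffineMap.homothety y (2⁻¹ : ℝ) w.2) ⁻¹' Q := by
  rintro _ ⟨x, hx, rfl⟩
  rw [mem_preimage, homothety_inv_two, homothety_inv_two]
  convert hQ.midpoint_mem hx hw using 1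
  ext <;> simp [midpoint_eq_smul_add, add_comm]

theorem hausdorffMeasure_inter_preimage_snd_singleton {X Y : Type*} [EMetricSpace X]
    [MeasurableSpace X] [BorelSpace X] [EMetricSpace Y] [MeasurableSpace Y] [BorelSpace Y]
    [SecondCountableTopologyEither X Y] {d : ℝ} (hd : 0 ≤ d) (Q : Set (X × Y)) (y : Y) :
    μH[d] (Q ∩ Prod.snd ⁻¹' {y}) = μH[d] ((·, y) ⁻¹' Q) := by
  have hiso : Isometry fun x : X => (x, y) := fun a b => by simp [Prod.edist_eq]
  rw [← hiso.hausdorffMeasure_image (.inl hd)]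
  congr 1
  ext ⟨x, y'⟩
  aesop

section ConvexSliceProjection

variable {E F : Type*}
  [NormedAddCommGroup E] [NormedSpace ℝ E] [MeasurableSpace E] [BorelSpace E]
  [FiniteDimensional ℝ E]
  [NormedAddCommGroup F] [NormedSpace ℝ F] [MeasurableSpace F] [BorelSpace F]
  [FiniteDimensional ℝ F]

theorem MeasureTheory.Measure.addHaar_eq_two_pow_mul_image_homothety_inv_two (μ : Measure E)
    [μ.IsAddHaarMeasure] (x : E) (s : Set E) :
    μ s = 2 ^ Module.finrank ℝ E * μ (AffineMap.homothety x (2⁻¹ : ℝ) '' s) := by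
  rw [Measure.addHaar_image_homothety, abs_of_pos (by positivity), inv_pow,
    ENNReal.ofReal_inv_of_pos (by positivity), ENNReal.ofReal_pow zero_le_two,
    ENNReal.ofReal_ofNat, ← mul_assoc, ENNReal.mul_inv_cancel (by positivity) (by simp),
    one_mul]

theorem Convex.measure_preimage_prodMk_mul_measure_image_snd_le (μ : Measure E)
    [μ.IsAddHaarMeasure] (ν : Measure F) [ν.IsAddHaarMeasure] {Q : Set (E × F)}
    (hQ : Convex ℝ Q) (y : F) :
    μ ((·, y) ⁻¹' Q) * ν (Prod.snd '' Q) ≤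
      2 ^ (Module.finrank ℝ E + Module.finrank ℝ F) * μ.prod ν Q := by
  set T := toMeasurable (μ.prod ν) Q
  have hT_slice : Measurable fun z => μ ((·, z) ⁻¹' T) :=
    measurable_measure_prodMk_right (measurableSet_toMeasurable _ _)
  set P := AffineMap.homothety y (2⁻¹ : ℝ) '' (Prod.snd '' Q)
  have hslice : ∀ z ∈ P, μ ((·, y) ⁻¹' Q) ≤ 2 ^ Module.finrank ℝ E * μ ((·, z) ⁻¹' T) := by
    rintro _ ⟨_, ⟨w, hw, rfl⟩, rfl⟩
    rw [μ.addHaar_eq_two_pow_mul_image_homothety_inv_two w.1]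
    gcongr
    exact (hQ.homothety_image_preimage_prodMk_subset hw y).trans
      (preimage_mono (subset_toMeasurable _ _))
  calc μ ((·, y) ⁻¹' Q) * ν (Prod.snd '' Q)
      = 2 ^ Module.finrank ℝ F * ∫⁻ _ in P, μ ((·, y) ⁻¹' Q) ∂ν := by
        rw [setLIntegral_const, ν.addHaar_eq_two_pow_mul_image_homothety_inv_two y]
        ring
    _ ≤ 2 ^ Module.finrank ℝ F * ∫⁻ z in P, 2 ^ Module.finrank ℝ E * μ ((·, z) ⁻¹' T) ∂ν := by
        gcongr 2 ^ _ * ?_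
        exact setLIntegral_mono (hT_slice.const_mul _) hslice
    _ ≤ 2 ^ Module.finrank ℝ F * ∫⁻ z, 2 ^ Module.finrank ℝ E * μ ((·, z) ⁻¹' T) ∂ν := by
        gcongr
        exact Measure.restrict_le_self
    _ = 2 ^ (Module.finrank ℝ E + Module.finrank ℝ F) * μ.prod ν Q := by
        rw [lintegral_const_mul _ hT_slice,
          ← Measure.prod_apply_symm (measurableSet_toMeasurable _ _), measure_toMeasurable, pow_add]
        ring

end ConvexSliceProjection

theorem EuclideanSpace.hausdorffMeasure_eq_smul_volume (d : ℕ) :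
    ∃ c : ℝ≥0, 0 < c ∧ (μH[d] : Measure (EuclideanSpace ℝ (Fin d))) = c • volume :=
  ⟨_, Measure.addHaarScalarFactor_pos_of_isAddHaarMeasure _ _,
    Measure.isAddLeftInvariant_eq_smul _ _⟩

/-- Lemma 6.7: estimating a convex volume using one slice and an
orthogonal projection. -/
theorem convex_volume_slice_projection (n' n'' : ℕ) :
    ∃ C : ℝ, 0 < C ∧
      ∀ Q : Set (Euc n' × Euc n''), Convex ℝ Q →
        ∀ xb ∈ Prod.snd '' Q,
          μH[(n' : ℝ)] (Q ∩ Prod.snd ⁻¹' {xb}) * μH[(n'' : ℝ)] (Prod.snd '' Q) ≤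
            ENNReal.ofReal C * volume Q := by
  obtain ⟨c', hc', hμ'⟩ := EuclideanSpace.hausdorffMeasure_eq_smul_volume n'
  obtain ⟨c'', hc'', hμ''⟩ := EuclideanSpace.hausdorffMeasure_eq_smul_volume n''
  refine ⟨2 ^ (n' + n'') * c' * c'', by positivity, fun Q hQ xb _ => ?_⟩
  have key := hQ.measure_preimage_prodMk_mul_measure_image_snd_le μH[(n' : ℝ)] μH[(n'' : ℝ)] xb
  rw [hausdorffMeasure_inter_preimage_snd_singleton (Nat.cast_nonneg n')]
  refine key.trans_eq ?_
  rw [hμ', hμ'', Measure.prod_smul_left, Measure.prod_smul_right, ← Measure.volume_eq_prod,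
    finrank_euclideanSpace_fin, finrank_euclideanSpace_fin, Measure.smul_apply,
    Measure.smul_apply, ENNReal.smul_def, ENNReal.smul_def, smul_eq_mul, smul_eq_mul,
    ENNReal.ofReal_mul (by positivity), ENNReal.ofReal_mul (by positivity),
    ENNReal.ofReal_pow zero_le_two, ENNReal.ofReal_ofNat, ENNReal.ofReal_coe_nnreal,
    ENNReal.ofReal_coe_nnreal]
  ring
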